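/- If (X,≤) is a separable globally hyperbolic poset and P, Q ⊆ X are compact, then the space C(P,Q) of causal curves π with π(0) ∈ P and π(1) ∈ Q is compact in the Vietoris topology. -/
import Mathlib


/-- `x` is way below `y`. -/
def wayBelow {P : Type*} [Preorder P] (x y : P) : Prop :=
  ∀ S : Set P, S.Nonempty → DirectedOn (· ≤ ·) S → ∀ s : P, IsLUB S s → y ≤ s →
    ∃ z ∈ S, x ≤ z

/-- A poset is a dcpo if every nonempty directed subset has a supremum. -/
def IsDcpo (P : Type*) [Preorder P] : Prop :=
  ∀ S : Set P, S.Nonempty → DirectedOn (· ≤ ·) S → ∃ s : P, IsLUB S s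

/-- `B` is a (domain-theoretic) basis for `P`. -/
def IsDomainBasis {P : Type*} [Preorder P] (B : Set P) : Prop :=
  ∀ x : P, ∃ S : Set P, S ⊆ B ∧ S.Nonempty ∧ DirectedOn (· ≤ ·) S ∧
    (∀ a ∈ S, wayBelow a x) ∧ IsLUB S x

/-- A poset is continuous if it has a basis (equivalently, the whole poset is a basis). -/
def IsContinuousPoset (P : Type*) [Preorder P] : Prop :=
  IsDomainBasis (Set.univ : Set P)

/-- The Scott topology on a poset. -/
def scottTop (P : Type*) [Preorder P] : TopologicalSpace P where
  IsOpen U := (∀ x ∈ U, ∀ y, x ≤ y → y ∈ U) ∧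
    ∀ S : Set P, S.Nonempty → DirectedOn (· ≤ ·) S → ∀ s : P, IsLUB S s → s ∈ U →
      (S ∩ U).Nonempty
  isOpen_univ := ⟨fun _ _ _ _ => trivial,
    fun S hS _ _ _ _ => hS.imp fun x hx => ⟨hx, trivial⟩⟩
  isOpen_inter := by
    rintro U V ⟨hUup, hUin⟩ ⟨hVup, hVin⟩
    refine ⟨fun x hx y hxy => ⟨hUup x hx.1 y hxy, hVup x hx.2 y hxy⟩, ?_⟩
    rintro S hS hdir s hs ⟨hsU, hsV⟩
    obtain ⟨a, haS, haU⟩ := hUin S hS hdir s hs hsU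
    obtain ⟨b, hbS, hbV⟩ := hVin S hS hdir s hs hsV
    obtain ⟨c, hcS, hac, hbc⟩ := hdir a haS b hbS
    exact ⟨c, hcS, hUup a haU c hac, hVup b hbV c hbc⟩
  isOpen_sUnion := by
    intro C hC
    refine ⟨fun x hx y hxy => ?_, ?_⟩
    · obtain ⟨t, htC, hxt⟩ := hx
      exact ⟨t, htC, (hC t htC).1 x hxt y hxy⟩
    · rintro S hS hdir s hs ⟨t, htC, hst⟩
      obtain ⟨a, haS, hat⟩ := (hC t htC).2 S hS hdir s hs hst
      exact ⟨a, haS, t, htC, hat⟩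

/-- A continuous poset is bicontinuous if the way-below relation admits the dual
characterization via filtered infima and each `↟x` is filtered with infimum `x`. -/
def IsBicontinuous (P : Type*) [Preorder P] : Prop :=
  IsContinuousPoset P ∧
  (∀ x y : P, wayBelow x y ↔
    ∀ S : Set P, S.Nonempty → DirectedOn (· ≥ ·) S → ∀ i : P, IsGLB S i → i ≤ x →
      ∃ s ∈ S, s ≤ y) ∧
  (∀ x : P, {a | wayBelow x a}.Nonempty ∧ DirectedOn (· ≥ ·) {a | wayBelow x a} ∧
    IsGLB {a | wayBelow x a} x)

/-- The interval topology on a bicontinuous poset, with basic open sets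
`(a,b) = {x | a ≪ x ≪ b}`. -/
def intervalTop (P : Type*) [Preorder P] : TopologicalSpace P :=
  .generateFrom {s | ∃ a b : P, s = {x | wayBelow a x ∧ wayBelow x b}}

/-- A globally hyperbolic poset: bicontinuous, with all closed intervals compact
in the interval topology. -/
def IsGloballyHyperbolic (P : Type*) [PartialOrder P] : Prop :=
  IsBicontinuous P ∧ ∀ a b : P, a ≤ b → @IsCompact P (intervalTop P) (Set.Icc a b)

variable (X : Type*) [PartialOrder X]

/-- Nonempty subsets of `X` compact in the interval topology. -/
def NEC := {K : Set X // K.Nonempty ∧ @IsCompact X (intervalTop X) K}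

/-- The Vietoris topology on the nonempty compact subsets of `X` (with its
interval topology), with basic open sets
`σ(U₁,…,Uₙ) = {K | K ⊆ ⋃ Uᵢ and K ∩ Uᵢ ≠ ∅ for all i}`. -/
def vietoris : TopologicalSpace (NEC X) :=
  .generateFrom {s | ∃ (n : ℕ) (U : Fin n → Set X),
    (∀ i, @IsOpen X (intervalTop X) (U i)) ∧
    s = {K : NEC X | K.1 ⊆ ⋃ i, U i ∧ ∀ i, (K.1 ∩ U i).Nonempty}}

/-- `X` is separable as a continuous poset: it has a countable basis. -/
def SeparablePoset : Prop := ∃ B : Set X, B.Countable ∧ IsDomainBasis B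

/-- A causal curve in a globally hyperbolic poset: a compact, connected,
linearly ordered subset. -/
def IsCausalCurve (π : Set X) : Prop :=
  @IsCompact X (intervalTop X) π ∧ @IsConnected X (intervalTop X) π ∧
    IsChain (· ≤ ·) π


section AuxLemmas

variable {Y : Type*} [PartialOrder Y]

lemma wayBelow_le {a x : Y} (h : wayBelow a x) : a ≤ x := by
  obtain ⟨z, hz, haz⟩ := h {x} ⟨x, rfl⟩
    (by rintro u hu v hv; rw [Set.mem_singleton_iff] at hu hv; subst hu; subst hv
        exact ⟨v, rfl, le_rfl, le_rfl⟩) x isLUB_singleton le_rfl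
  rw [Set.mem_singleton_iff] at hz; subst hz; exact haz

lemma isOpen_intervalTop_basic (a b : Y) :
    @IsOpen Y (intervalTop Y) {z | wayBelow a z ∧ wayBelow z b} :=
  TopologicalSpace.isOpen_generateFrom_of_mem ⟨a, b, rfl⟩

/-- Order separation in a bicontinuous poset: if `¬ x ≤ y` then there are
interval-open neighbourhoods `U ∋ x`, `V ∋ y` with no `u ≤ v` for `u ∈ U`, `v ∈ V`. -/
lemma orderSep (hb : IsBicontinuous Y) {x y : Y} (h : ¬ x ≤ y) :
    ∃ U V : Set Y, @IsOpen Y (intervalTop Y) U ∧ @IsOpen Y (intervalTop Y) V ∧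
      x ∈ U ∧ y ∈ V ∧ ∀ u ∈ U, ∀ v ∈ V, ¬ u ≤ v := by
  obtain ⟨hc, -, hfil⟩ := hb
  obtain ⟨Sx, -, hSxne, -, hSxwb, hSxlub⟩ := hc x
  have hexa : ∃ a ∈ Sx, ¬ a ≤ y := by
    by_contra hno; push_neg at hno
    exact h (hSxlub.2 fun a ha => hno a ha)
  obtain ⟨a, haS, hay⟩ := hexa
  have hax : wayBelow a x := hSxwb a haS
  obtain ⟨⟨d, hd⟩, -, -⟩ := hfil x
  obtain ⟨Sy, -, ⟨s, hsS⟩, -, hSywb, -⟩ := hc y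
  have hsy : wayBelow s y := hSywb s hsS
  obtain ⟨-, -, hglb⟩ := hfil y
  have hexb : ∃ b ∈ {c | wayBelow y c}, ¬ a ≤ b := by
    by_contra hno; push_neg at hno
    exact hay (hglb.2 fun b hbm => hno b hbm)
  obtain ⟨b, hyb, hab⟩ := hexb
  refine ⟨{z | wayBelow a z ∧ wayBelow z d}, {z | wayBelow s z ∧ wayBelow z b},
    isOpen_intervalTop_basic a d, isOpen_intervalTop_basic s b, ⟨hax, hd⟩, ⟨hsy, hyb⟩, ?_⟩
  rintro u ⟨hau, -⟩ v ⟨-, hvb⟩ huv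
  exact hab ((wayBelow_le hau).trans (huv.trans (wayBelow_le hvb)))

lemma t2_intervalTop (hb : IsBicontinuous Y) : @T2Space Y (intervalTop Y) := by
  letI := intervalTop Y
  constructor
  intro x y hxy
  have hcase : ¬ x ≤ y ∨ ¬ y ≤ x := by
    by_contra hno; push_neg at hno; exact hxy (le_antisymm hno.1 hno.2)
  rcases hcase with h | h
  · obtain ⟨U, V, hU, hV, hxU, hyV, hsep⟩ := orderSep hb h
    exact ⟨U, V, hU, hV, hxU, hyV,
      Set.disjoint_left.mpr fun z hzU hzV => hsep z hzU z hzV le_rfl⟩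
  · obtain ⟨U, V, hU, hV, hyU, hxV, hsep⟩ := orderSep hb h
    exact ⟨V, U, hV, hU, hxV, hyU,
      Set.disjoint_left.mpr fun z hzV hzU => hsep z hzU z hzV le_rfl⟩

end AuxLemmas

/-- **Compactness of the space of causal curves.** If `X` is a separable
globally hyperbolic poset and `P, Q ⊆ X` are compact, then the space of causal
curves starting in `P` and ending in `Q` is compact in the Vietoris topology. -/
theorem causalCurves_compact (hX : IsGloballyHyperbolic X) (hsep : SeparablePoset X)
    (P Q : Set X) (hP : @IsCompact X (intervalTop X) P)
    (hQ : @IsCompact X (intervalTop X) Q) :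
    @IsCompact (NEC X) (vietoris X)
      {π : NEC X | IsCausalCurve X π.1 ∧
        (∃ p, IsLeast π.1 p ∧ p ∈ P) ∧ (∃ q, IsGreatest π.1 q ∧ q ∈ Q)} := by
  clear hsep
  letI tX : TopologicalSpace X := intervalTop X
  haveI hT2 : T2Space X := t2_intervalTop hX.1
  letI tN : TopologicalSpace (NEC X) := vietoris X
  set C : Set (NEC X) := {π : NEC X | IsCausalCurve X π.1 ∧
      (∃ p, IsLeast π.1 p ∧ p ∈ P) ∧ (∃ q, IsGreatest π.1 q ∧ q ∈ Q)} with hCdef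
  rw [isCompact_iff_ultrafilter_le_nhds']
  intro f hCf
  classical
  -- least / greatest selection functions
  set m : NEC X → X := fun K => if h : ∃ p, IsLeast K.1 p ∧ p ∈ P then h.choose
    else K.2.1.choose with hmdef
  set g : NEC X → X := fun K => if h : ∃ q, IsGreatest K.1 q ∧ q ∈ Q then h.choose
    else K.2.1.choose with hgdef
  have hmC : ∀ K ∈ C, IsLeast K.1 (m K) ∧ m K ∈ P := by
    intro K hK
    have h := hK.2.1
    simp only [hmdef, dif_pos h]
    exact h.choose_spec
  have hgC : ∀ K ∈ C, IsGreatest K.1 (g K) ∧ g K ∈ Q := by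
    intro K hK
    have h := hK.2.2
    simp only [hgdef, dif_pos h]
    exact h.choose_spec
  -- limits of endpoints
  have hPm : P ∈ Ultrafilter.map m f := by
    rw [Ultrafilter.mem_map]
    exact Filter.mem_of_superset hCf fun K hK => (hmC K hK).2
  obtain ⟨p, hpP, hpf⟩ := hP.ultrafilter_le_nhds' (Ultrafilter.map m f) hPm
  have hQg : Q ∈ Ultrafilter.map g f := by
    rw [Ultrafilter.mem_map]
    exact Filter.mem_of_superset hCf fun K hK => (hgC K hK).2
  obtain ⟨q, hqQ, hqf⟩ := hQ.ultrafilter_le_nhds' (Ultrafilter.map g f) hQg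
  have hpmem : ∀ V : Set X, IsOpen V → p ∈ V → m ⁻¹' V ∈ f := by
    intro V hV hpV
    have : V ∈ Ultrafilter.map m f := hpf (hV.mem_nhds hpV)
    rwa [Ultrafilter.mem_map] at this
  have hqmem : ∀ V : Set X, IsOpen V → q ∈ V → g ⁻¹' V ∈ f := by
    intro V hV hqV
    have : V ∈ Ultrafilter.map g f := hqf (hV.mem_nhds hqV)
    rwa [Ultrafilter.mem_map] at this
  -- the limit curve
  set Pi : Set X := {x : X | ∀ V : Set X, IsOpen V → x ∈ V →
      {K : NEC X | (K.1 ∩ V).Nonempty} ∈ f} with hPidef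
  have hlim_mem : ∀ (e : NEC X → X) (S : Set (NEC X)), S ∈ f →
      (∀ K ∈ S, e K ∈ K.1) → ∀ x : X, ↑(Ultrafilter.map e f) ≤ nhds x → x ∈ Pi := by
    intro e S hS he x hx V hV hxV
    have h1 : e ⁻¹' V ∈ f := by
      have : V ∈ Ultrafilter.map e f := hx (hV.mem_nhds hxV)
      rwa [Ultrafilter.mem_map] at this
    exact Filter.mem_of_superset (Filter.inter_mem h1 hS)
      fun K hK => ⟨e K, he K hK.2, hK.1⟩
  have hpPi : p ∈ Pi := hlim_mem m C hCf (fun K hK => (hmC K hK).1.1) p hpf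
  have hqPi : q ∈ Pi := hlim_mem g C hCf (fun K hK => (hgC K hK).1.1) q hqf
  -- bounding interval [a, b]
  obtain ⟨Sp, -, ⟨a, haS⟩, -, hSpwb, -⟩ := hX.1.1 p
  have hap : wayBelow a p := hSpwb a haS
  obtain ⟨⟨d, hpd⟩, -, -⟩ := hX.1.2.2 p
  obtain ⟨Sq, -, ⟨s, hsS⟩, -, hSqwb, -⟩ := hX.1.1 q
  have hsq : wayBelow s q := hSqwb s hsS
  obtain ⟨⟨b, hqb⟩, -, -⟩ := hX.1.2.2 q
  have hO1 : m ⁻¹' {z | wayBelow a z ∧ wayBelow z d} ∈ f :=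
    hpmem _ (isOpen_intervalTop_basic a d) ⟨hap, hpd⟩
  have hO2 : g ⁻¹' {z | wayBelow s z ∧ wayBelow z b} ∈ f :=
    hqmem _ (isOpen_intervalTop_basic s b) ⟨hsq, hqb⟩
  have hBf : {K : NEC X | K.1 ⊆ Set.Icc a b} ∈ f := by
    refine Filter.mem_of_superset (Filter.inter_mem hCf (Filter.inter_mem hO1 hO2)) ?_
    rintro K ⟨hKC, h1, h2⟩ z hz
    exact ⟨(wayBelow_le h1.1).trans ((hmC K hKC).1.2 hz),
      ((hgC K hKC).1.2 hz).trans (wayBelow_le h2.2)⟩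
  have hab : a ≤ b := by
    obtain ⟨K, hKC, h1, h2⟩ := Ultrafilter.nonempty_of_mem
      (Filter.inter_mem hCf (Filter.inter_mem hO1 hO2))
    exact ((wayBelow_le h1.1).trans ((hmC K hKC).1.2 ((hgC K hKC).1.1))).trans
      (wayBelow_le h2.2)
  have hIcc : IsCompact (Set.Icc a b) := hX.2 a b hab
  -- Pi is closed, bounded, compact, nonempty
  have hPiclosed : IsClosed Pi := by
    rw [← isOpen_compl_iff, isOpen_iff_forall_mem_open]
    intro x hx
    simp only [hPidef, Set.mem_compl_iff, Set.mem_setOf_eq] at hx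
    push_neg at hx
    obtain ⟨V, hV, hxV, hVf⟩ := hx
    refine ⟨V, ?_, hV, hxV⟩
    intro y hy hyPi
    exact hVf (hyPi V hV hy)
  have hPisub : Pi ⊆ Set.Icc a b := by
    intro x hx
    by_contra hnot
    have hVf := hx (Set.Icc a b)ᶜ hIcc.isClosed.isOpen_compl hnot
    obtain ⟨K, hK1, hK2⟩ := Ultrafilter.nonempty_of_mem (Filter.inter_mem hVf hBf)
    obtain ⟨z, hzK, hzc⟩ := hK1
    exact hzc (hK2 hzK)
  have hPicpt : IsCompact Pi := hIcc.of_isClosed_subset hPiclosed hPisub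
  have hPine : Pi.Nonempty := ⟨p, hpPi⟩
  -- p is the least element of Pi, q the greatest
  have hleast : IsLeast Pi p := by
    refine ⟨hpPi, fun z hz => ?_⟩
    by_contra hpz
    obtain ⟨U, V, hU, hV, hpU, hzV, hsep⟩ := orderSep hX.1 hpz
    have h1 : m ⁻¹' U ∈ f := hpmem U hU hpU
    have h2 := hz V hV hzV
    obtain ⟨K, hKC, hKU, hKV⟩ := Ultrafilter.nonempty_of_mem
      (Filter.inter_mem hCf (Filter.inter_mem h1 h2))
    obtain ⟨v, hvK, hvV⟩ := hKV
    exact hsep (m K) hKU v hvV ((hmC K hKC).1.2 hvK)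
  have hgreatest : IsGreatest Pi q := by
    refine ⟨hqPi, fun z hz => ?_⟩
    by_contra hzq
    obtain ⟨U, V, hU, hV, hzU, hqV, hsep⟩ := orderSep hX.1 hzq
    have h1 := hz U hU hzU
    have h2 : g ⁻¹' V ∈ f := hqmem V hV hqV
    obtain ⟨K, hKC, hKU, hKV⟩ := Ultrafilter.nonempty_of_mem
      (Filter.inter_mem hCf (Filter.inter_mem h1 h2))
    obtain ⟨u, huK, huU⟩ := hKU
    exact hsep u huU (g K) hKV ((hgC K hKC).1.2 huK)
  -- Pi is a chain
  have hchain : IsChain (· ≤ ·) Pi := by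
    intro x hx y hy hne
    by_contra hcmp
    rw [not_or] at hcmp
    obtain ⟨U1, V1, hU1, hV1, hxU1, hyV1, hs1⟩ := orderSep hX.1 hcmp.1
    obtain ⟨U2, V2, hU2, hV2, hyU2, hxV2, hs2⟩ := orderSep hX.1 hcmp.2
    have h1 := hx (U1 ∩ V2) (hU1.inter hV2) ⟨hxU1, hxV2⟩
    have h2 := hy (V1 ∩ U2) (hV1.inter hU2) ⟨hyV1, hyU2⟩
    obtain ⟨K, hKC, hKU, hKV⟩ := Ultrafilter.nonempty_of_mem
      (Filter.inter_mem hCf (Filter.inter_mem h1 h2))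
    obtain ⟨u, huK, huU1, huV2⟩ := hKU
    obtain ⟨v, hvK, hvV1, hvU2⟩ := hKV
    have hnuv : ¬ u ≤ v := hs1 u huU1 v hvV1
    have hnvu : ¬ v ≤ u := hs2 v hvU2 u huV2
    rcases eq_or_ne u v with rfl | huv
    · exact hnuv le_rfl
    · rcases hKC.1.2.2 huK hvK huv with h | h
      · exact hnuv h
      · exact hnvu h
  -- every basic Vietoris open containing Pi is in f
  have hgenf : ∀ (n : ℕ) (U : Fin n → Set X), (∀ i, IsOpen (U i)) →
      Pi ⊆ (⋃ i, U i) → (∀ i, (Pi ∩ U i).Nonempty) →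
      {K : NEC X | K.1 ⊆ ⋃ i, U i ∧ ∀ i, (K.1 ∩ U i).Nonempty} ∈ f := by
    intro n U hUo hsub hne
    have hmeets : ∀ i, {K : NEC X | (K.1 ∩ U i).Nonempty} ∈ f := by
      intro i
      obtain ⟨x, hxPi, hxU⟩ := hne i
      exact hxPi (U i) (hUo i) hxU
    have hsubW : {K : NEC X | K.1 ⊆ ⋃ i, U i} ∈ f := by
      by_contra hno
      have hcomp : {K : NEC X | K.1 ⊆ ⋃ i, U i}ᶜ ∈ f :=
        Ultrafilter.compl_mem_iff_notMem.mpr hno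
      have hWo : IsOpen (⋃ i, U i) := isOpen_iUnion hUo
      set e : NEC X → X := fun K => if h : (K.1 ∩ (⋃ i, U i)ᶜ).Nonempty then h.choose
        else K.2.1.choose with hedef
      have heK : ∀ K ∈ {K : NEC X | K.1 ⊆ ⋃ i, U i}ᶜ, e K ∈ K.1 ∩ (⋃ i, U i)ᶜ := by
        intro K hK
        have h : (K.1 ∩ (⋃ i, U i)ᶜ).Nonempty := by
          rw [Set.mem_compl_iff, Set.mem_setOf_eq, Set.not_subset] at hK
          obtain ⟨z, hz1, hz2⟩ := hK
          exact ⟨z, hz1, hz2⟩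
        simp only [hedef, dif_pos h]
        exact h.choose_spec
      have hZ : (Set.Icc a b ∩ (⋃ i, U i)ᶜ) ∈ Ultrafilter.map e f := by
        rw [Ultrafilter.mem_map]
        refine Filter.mem_of_superset (Filter.inter_mem hcomp hBf) ?_
        rintro K ⟨h1, h2⟩
        exact ⟨h2 (heK K h1).1, (heK K h1).2⟩
      obtain ⟨x, hxZ, hxlim⟩ := (hIcc.inter_right hWo.isClosed_compl).ultrafilter_le_nhds'
        (Ultrafilter.map e f) hZ
      have hxPi : x ∈ Pi := hlim_mem e _ hcomp (fun K hK => (heK K hK).1) x hxlim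
      exact hxZ.2 (hsub hxPi)
    refine Filter.mem_of_superset
      (Filter.inter_mem hsubW (Filter.iInter_mem.mpr hmeets)) ?_
    rintro K ⟨h1, h2⟩
    exact ⟨h1, fun i => Set.mem_iInter.mp h2 i⟩
  -- Pi is connected
  have hconn : IsConnected Pi := by
    refine ⟨hPine, fun u v hu hv hsub hneu hnev => ?_⟩
    by_contra hempty
    rw [Set.not_nonempty_iff_eq_empty] at hempty
    have hAeq : Pi ∩ u = Pi ∩ vᶜ := by
      ext z
      constructor
      · rintro ⟨hz, hzu⟩
        refine ⟨hz, fun hzv => ?_⟩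
        exact absurd hempty (Set.nonempty_iff_ne_empty.mp ⟨z, hz, hzu, hzv⟩)
      · rintro ⟨hz, hznv⟩
        rcases hsub hz with h | h
        · exact ⟨hz, h⟩
        · exact absurd h hznv
    have hBeq : Pi ∩ v = Pi ∩ uᶜ := by
      ext z
      constructor
      · rintro ⟨hz, hzv⟩
        refine ⟨hz, fun hzu => ?_⟩
        exact absurd hempty (Set.nonempty_iff_ne_empty.mp ⟨z, hz, hzu, hzv⟩)
      · rintro ⟨hz, hznu⟩
        rcases hsub hz with h | h
        · exact absurd h hznu
        · exact ⟨hz, h⟩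
    have hAc : IsCompact (Pi ∩ u) := hAeq ▸ hPicpt.inter_right hv.isClosed_compl
    have hBc : IsCompact (Pi ∩ v) := hBeq ▸ hPicpt.inter_right hu.isClosed_compl
    have hd : Disjoint (Pi ∩ u) (Pi ∩ v) := by
      rw [Set.disjoint_left]
      rintro z ⟨hz, hzu⟩ ⟨-, hzv⟩
      exact absurd hempty (Set.nonempty_iff_ne_empty.mp ⟨z, hz, hzu, hzv⟩)
    obtain ⟨U', V', hU', hV', hAU, hBV, hdUV⟩ :=
      SeparatedNhds.of_isCompact_isCompact hAc hBc hd
    set Uf : Fin 2 → Set X := ![U', V'] with hUfdef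
    have hUfo : ∀ i, IsOpen (Uf i) := by
      intro i
      fin_cases i
      · simpa [hUfdef] using hU'
      · simpa [hUfdef] using hV'
    have hUfsub : Pi ⊆ ⋃ i, Uf i := by
      intro z hz
      rcases hsub hz with h | h
      · exact Set.mem_iUnion.mpr ⟨0, hAU ⟨hz, h⟩⟩
      · exact Set.mem_iUnion.mpr ⟨1, hBV ⟨hz, h⟩⟩
    have hUfne : ∀ i, (Pi ∩ Uf i).Nonempty := by
      intro i
      fin_cases i
      · obtain ⟨z, hz⟩ := hneu
        exact ⟨z, hz.1, by simpa [hUfdef] using hAU hz⟩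
      · obtain ⟨z, hz⟩ := hnev
        exact ⟨z, hz.1, by simpa [hUfdef] using hBV hz⟩
    obtain ⟨K, hKC, hKsub, hKmeet⟩ := Ultrafilter.nonempty_of_mem
      (Filter.inter_mem hCf (hgenf 2 Uf hUfo hUfsub hUfne))
    have hKsub' : K.1 ⊆ U' ∪ V' := by
      intro z hz
      rcases Set.mem_iUnion.mp (hKsub hz) with ⟨i, hi⟩
      fin_cases i
      · exact Or.inl (by simpa [hUfdef] using hi)
      · exact Or.inr (by simpa [hUfdef] using hi)
    have hKU' : (K.1 ∩ U').Nonempty := by simpa [hUfdef] using hKmeet 0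
    have hKV' : (K.1 ∩ V').Nonempty := by simpa [hUfdef] using hKmeet 1
    obtain ⟨z, hz1, hz2⟩ := hKC.1.2.1.2 U' V' hU' hV' hKsub' hKU' hKV'
    exact Set.disjoint_left.mp hdUV hz2.1 hz2.2
  -- assemble the limit curve and prove convergence
  refine ⟨⟨Pi, hPine, hPicpt⟩, ⟨⟨hPicpt, hconn, hchain⟩, ⟨p, hleast, hpP⟩,
    ⟨q, hgreatest, hqQ⟩⟩, ?_⟩
  have hnhds : @nhds (NEC X) tN ⟨Pi, hPine, hPicpt⟩ =
      ⨅ s ∈ {s | (⟨Pi, hPine, hPicpt⟩ : NEC X) ∈ s ∧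
        s ∈ {s | ∃ (n : ℕ) (U : Fin n → Set X),
          (∀ i, @IsOpen X (intervalTop X) (U i)) ∧
          s = {K : NEC X | K.1 ⊆ ⋃ i, U i ∧ ∀ i, (K.1 ∩ U i).Nonempty}}},
        Filter.principal s := TopologicalSpace.nhds_generateFrom
  rw [hnhds]
  refine le_iInf fun s => le_iInf fun hs => Filter.le_principal_iff.mpr ?_
  obtain ⟨hPis, n, U, hUo, rfl⟩ := hs
  exact hgenf n U hUo hPis.1 hPis.2
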